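/- arXiv:1603.03096 — 2 statements merged into one kernel-verified Lean document; each statement's English description precedes it below -/
import Mathlib

section
/- Let n ≥ 1 and let Λ be a positive ℂ-linear map on n×n complex matrices that is moreover sub-unital, i.e., the identity matrix dominates Λ(I) in the Loewner order: I − Λ(I) is positive semidefinite. Define V := Σ_{i,j} E_{ij} ⊗ Λ(E_{ji}). Then for every separable state σ on ℂⁿ ⊗ ℂⁿ, the real number Tr(σ·V) satisfies 0 ≤ Tr(σ·V) ≤ 1. -/
/-!
Writing `V = ∑ᵢⱼ Eᵢⱼ ⊗ Λ(Eⱼᵢ)`, one gets `Tr((A ⊗ B) V) = Tr(B Λ(A))`. For density matrices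
`A`, `B` this lies in `[0, 1]`: it is the trace of a product of two positive matrices, and
`A ≤ Tr(A) • I = I` gives `Λ(A) ≤ Λ(I) ≤ I`, so `Tr(B Λ(A)) ≤ Tr(B) = 1`. A separable state
makes `Tr(σ V)` a convex combination of such values.
-/

open Matrix Kronecker ComplexOrder
open scoped MatrixOrder

namespace Matrix

section Kronecker

variable {m R : Type*} [Fintype m] [DecidableEq m] [CommSemiring R]

lemma trace_kronecker_mul_sum_single_kronecker_map (Λ : Matrix m m R →ₗ[R] Matrix m m R)
    (A B : Matrix m m R) :
    ((A ⊗ₖ B) * ∑ i, ∑ j, single i j (1 : R) ⊗ₖ Λ (single j i 1)).trace = (B * Λ A).trace := by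
  conv_rhs => rw [matrix_eq_sum_single A]
  simp only [Finset.mul_sum, ← mul_kronecker_mul, trace_sum, trace_kronecker, trace_mul_single,
    map_sum]
  rw [Finset.sum_comm]
  refine Finset.sum_congr rfl fun j _ => Finset.sum_congr rfl fun i _ => ?_
  have hsingle : single j i (A j i) = A j i • single j i 1 := by
    rw [smul_single, smul_eq_mul, mul_one]
  rw [hsingle, map_smul, Matrix.mul_smul, trace_smul, MulOpposite.op_one, one_smul, smul_eq_mul]

end Kronecker

section LoewnerOrder

variable {n 𝕜 : Type*} [Fintype n] [DecidableEq n] [RCLike 𝕜]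

lemma trace_mul_nonneg {A B : Matrix n n 𝕜} (hA : 0 ≤ A) (hB : 0 ≤ B) :
    0 ≤ (A * B).trace := by
  rw [← CFC.sqrt_mul_sqrt_self B hB, ← mul_assoc, trace_mul_comm, ← mul_assoc]
  exact (nonneg_iff_posSemidef.mp (conjugate_nonneg_of_nonneg hA (CFC.sqrt_nonneg B))).trace_nonneg

lemma trace_mul_le_trace_of_le_one {A B : Matrix n n 𝕜} (hA : 0 ≤ A) (hB : B ≤ 1) :
    (A * B).trace ≤ A.trace := by
  have h := trace_mul_nonneg hA (sub_nonneg.mpr hB)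
  rwa [Matrix.mul_sub, mul_one, trace_sub, sub_nonneg] at h

lemma PosSemidef.le_trace_smul_one {A : Matrix n n 𝕜} (hA : A.PosSemidef) :
    A ≤ A.trace • 1 := by
  have hle : A ≤ algebraMap ℝ _ (∑ i, hA.1.eigenvalues i) := by
    refine le_algebraMap_of_spectrum_le (fun x hx => ?_) hA.1.isSelfAdjoint
    obtain ⟨i, rfl⟩ := hA.1.spectrum_real_eq_range_eigenvalues ▸ hx
    exact Finset.single_le_sum (fun j _ => hA.eigenvalues_nonneg j) (Finset.mem_univ i)
  rwa [hA.1.trace_eq_sum_eigenvalues, ← RCLike.ofReal_sum, ← RCLike.real_smul_eq_coe_smul (K := 𝕜),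
    ← Algebra.algebraMap_eq_smul_one]

lemma PosSemidef.le_one_of_trace_eq_one {A : Matrix n n 𝕜} (hA : A.PosSemidef)
    (htr : A.trace = 1) : A ≤ 1 := by
  simpa only [htr, one_smul] using hA.le_trace_smul_one

lemma trace_mul_map_mem_Icc {Λ : Matrix n n 𝕜 →ₗ[𝕜] Matrix n n 𝕜}
    (hΛpos : ∀ A : Matrix n n 𝕜, A.PosSemidef → (Λ A).PosSemidef) (hΛsub : (1 - Λ 1).PosSemidef)
    {A B : Matrix n n 𝕜} (hA : A.PosSemidef) (hAtr : A.trace = 1) (hB : B.PosSemidef)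
    (hBtr : B.trace = 1) : (B * Λ A).trace ∈ Set.Icc 0 1 := by
  have hΛA : Λ A ≤ 1 := calc
    Λ A ≤ Λ 1 := by simpa only [le_iff, map_sub] using hΛpos _ (hA.le_one_of_trace_eq_one hAtr)
    _ ≤ 1 := hΛsub
  exact ⟨trace_mul_nonneg hB.nonneg (hΛpos A hA).nonneg,
    hBtr ▸ trace_mul_le_trace_of_le_one hB.nonneg hΛA⟩

end LoewnerOrder

end Matrix

theorem subunital_positive_witness_separable_bounds_general
    (n : ℕ)
    (Λ : Matrix (Fin n) (Fin n) ℂ →ₗ[ℂ] Matrix (Fin n) (Fin n) ℂ)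
    (hΛpos : ∀ A : Matrix (Fin n) (Fin n) ℂ, A.PosSemidef → (Λ A).PosSemidef)
    (hΛsub : ((1 : Matrix (Fin n) (Fin n) ℂ) - Λ 1).PosSemidef)
    (V : Matrix (Fin n × Fin n) (Fin n × Fin n) ℂ)
    (hV : V = ∑ i : Fin n, ∑ j : Fin n,
        (Matrix.single i j (1 : ℂ)) ⊗ₖ (Λ (Matrix.single j i (1 : ℂ))))
    (K : Type) [Fintype K]
    (p : K → ℝ) (hp : ∀ k, 0 ≤ p k) (hpsum : ∑ k, p k = 1)
    (σ₁ σ₂ : K → Matrix (Fin n) (Fin n) ℂ)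
    (h₁pos : ∀ k, (σ₁ k).PosSemidef) (h₁tr : ∀ k, (σ₁ k).trace = 1)
    (h₂pos : ∀ k, (σ₂ k).PosSemidef) (h₂tr : ∀ k, (σ₂ k).trace = 1)
    (σ : Matrix (Fin n × Fin n) (Fin n × Fin n) ℂ)
    (hσ : σ = ∑ k : K, (p k : ℂ) • ((σ₁ k) ⊗ₖ (σ₂ k))) :
    (σ * V).trace.im = 0 ∧ 0 ≤ (σ * V).trace.re ∧ (σ * V).trace.re ≤ 1 := by
  subst hV hσ
  have htrace : ((∑ k, (p k : ℂ) • (σ₁ k ⊗ₖ σ₂ k)) *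
      ∑ i, ∑ j, single i j (1 : ℂ) ⊗ₖ Λ (single j i 1)).trace =
      ∑ k, p k • (σ₂ k * Λ (σ₁ k)).trace := by
    simp only [Finset.sum_mul, trace_sum, smul_mul, trace_smul,
      trace_kronecker_mul_sum_single_kronecker_map, Complex.coe_smul]
  obtain ⟨hnonneg, hle_one⟩ : _ ∈ Set.Icc (0 : ℂ) 1 :=
    htrace ▸ (convex_Icc 0 1).sum_mem (fun k _ => hp k) hpsum fun k _ =>
      trace_mul_map_mem_Icc hΛpos hΛsub (h₁pos k) (h₁tr k) (h₂pos k) (h₂tr k)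
  rw [Complex.nonneg_iff] at hnonneg
  rw [Complex.le_def] at hle_one
  exact ⟨hnonneg.2.symm, hnonneg.1, hle_one.1⟩

/-- If `Λ` is a positive, sub-unital (`I − Λ(I)` positive semidefinite)
ℂ-linear map on `n×n` complex matrices and `V := Σ_{i,j} E_{ij} ⊗ Λ(E_{ji})`,
then for every separable state `σ` on `ℂⁿ ⊗ ℂⁿ`, `Tr(σ·V)` is a real number in `[0,1]`. -/
theorem subunital_positive_witness_separable_bounds
    (n : ℕ) (hn : 1 ≤ n)
    (Λ : Matrix (Fin n) (Fin n) ℂ →ₗ[ℂ] Matrix (Fin n) (Fin n) ℂ)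
    (hΛpos : ∀ A : Matrix (Fin n) (Fin n) ℂ, A.PosSemidef → (Λ A).PosSemidef)
    (hΛsub : ((1 : Matrix (Fin n) (Fin n) ℂ) - Λ 1).PosSemidef)
    (V : Matrix (Fin n × Fin n) (Fin n × Fin n) ℂ)
    (hV : V = ∑ i : Fin n, ∑ j : Fin n,
        (Matrix.single i j (1 : ℂ)) ⊗ₖ (Λ (Matrix.single j i (1 : ℂ))))
    (K : Type) [Fintype K]
    (p : K → ℝ) (hp : ∀ k, 0 ≤ p k) (hpsum : ∑ k, p k = 1)
    (σ₁ σ₂ : K → Matrix (Fin n) (Fin n) ℂ)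
    (h₁pos : ∀ k, (σ₁ k).PosSemidef) (h₁tr : ∀ k, (σ₁ k).trace = 1)
    (h₂pos : ∀ k, (σ₂ k).PosSemidef) (h₂tr : ∀ k, (σ₂ k).trace = 1)
    (σ : Matrix (Fin n × Fin n) (Fin n × Fin n) ℂ)
    (hσ : σ = ∑ k : K, (p k : ℂ) • ((σ₁ k) ⊗ₖ (σ₂ k))) :
    (σ * V).trace.im = 0 ∧ 0 ≤ (σ * V).trace.re ∧ (σ * V).trace.re ≤ 1 :=
  subunital_positive_witness_separable_bounds_general n Λ hΛpos hΛsub V hV K p hp hpsum σ₁ σ₂ h₁pos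
    h₁tr h₂pos h₂tr σ hσ
end

section
/- Let n ≥ 1, let T be a subset of {1,…,n}, and define the restricted witness W_T := Σ_{i,j∈T} E_{ij} ⊗ E_{ji}, where E_{ij} are the matrix units and ⊗ is the Kronecker product. Then for every separable state σ on ℂⁿ ⊗ ℂⁿ, the real number Tr(σ·W_T) satisfies 0 ≤ Tr(σ·W_T) ≤ 1. In other words, the witness built from any subset of the basis of matrix units still satisfies the separability bounds. -/
open Matrix Kronecker ComplexOrder

/-!
Writing `A_T` for the principal submatrix of `A` on `T`, one computes
`Tr((A ⊗ B) W_T) = Σ_{i,j ∈ T} A_{ji} B_{ij} = Tr(A_T B_T)`. Principal submatrices of positive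
semidefinite matrices are positive semidefinite, with trace at most the full trace. For positive
semidefinite `A = CᴴC` and `B = DᴴD` we have `Tr(AB) = ‖C Dᴴ‖²` in the Frobenius norm, which
lies between `0` and `‖C‖² ‖D‖² = Tr A · Tr B` by submultiplicativity. Hence every product
state gives a value in `[0, 1]`, and so does every convex combination of them.
-/

namespace Matrix

section Frobenius

variable {𝕜 m n : Type*} [RCLike 𝕜] [Fintype m] [Fintype n]

attribute [local instance] Matrix.frobeniusNormedAddCommGroup

theorem trace_conjTranspose_mul_self_eq_frobenius_norm_sq (A : Matrix m n 𝕜) :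
    (Aᴴ * A).trace = ((‖A‖ ^ 2 : ℝ) : 𝕜) := by
  rw [frobenius_norm_def, ← Real.rpow_natCast, ← Real.rpow_mul (by positivity)]
  norm_num [Real.rpow_two, trace, mul_apply, RCLike.conj_mul]
  rw [Finset.sum_comm]

theorem trace_conjTranspose_mul_self_mul_conjTranspose_mul_self {l : Type*} [Fintype l]
    (C : Matrix m n 𝕜) (D : Matrix l n 𝕜) :
    (Cᴴ * C * (Dᴴ * D)).trace = ((C * Dᴴ)ᴴ * (C * Dᴴ)).trace := by
  rw [conjTranspose_mul, conjTranspose_conjTranspose, trace_mul_comm (D * Cᴴ), Matrix.mul_assoc,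
    trace_mul_comm]
  simp only [Matrix.mul_assoc]

namespace PosSemidef

variable [DecidableEq n] {A B : Matrix n n 𝕜}

theorem exists_eq_conjTranspose_mul_self (hA : A.PosSemidef) :
    ∃ C : Matrix n n 𝕜, A = Cᴴ * C := by
  open scoped MatrixOrder in
  exact CStarAlgebra.nonneg_iff_eq_star_mul_self.mp hA.nonneg

theorem trace_mul_nonneg (hA : A.PosSemidef) (hB : B.PosSemidef) : 0 ≤ (A * B).trace := by
  obtain ⟨C, rfl⟩ := hA.exists_eq_conjTranspose_mul_self
  obtain ⟨D, rfl⟩ := hB.exists_eq_conjTranspose_mul_self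
  rw [trace_conjTranspose_mul_self_mul_conjTranspose_mul_self,
    trace_conjTranspose_mul_self_eq_frobenius_norm_sq]
  exact RCLike.ofReal_nonneg.mpr (sq_nonneg _)

theorem trace_mul_le_trace_mul_trace (hA : A.PosSemidef) (hB : B.PosSemidef) :
    (A * B).trace ≤ A.trace * B.trace := by
  obtain ⟨C, rfl⟩ := hA.exists_eq_conjTranspose_mul_self
  obtain ⟨D, rfl⟩ := hB.exists_eq_conjTranspose_mul_self
  simp only [trace_conjTranspose_mul_self_mul_conjTranspose_mul_self,
    trace_conjTranspose_mul_self_eq_frobenius_norm_sq, ← RCLike.ofReal_mul,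
    RCLike.ofReal_le_ofReal, ← mul_pow]
  calc ‖C * Dᴴ‖ ^ 2 ≤ (‖C‖ * ‖Dᴴ‖) ^ 2 := by gcongr; exact frobenius_norm_mul C Dᴴ
    _ = (‖C‖ * ‖D‖) ^ 2 := by rw [frobenius_norm_conjTranspose]

end PosSemidef

end Frobenius

theorem PosSemidef.trace_submatrix_le {𝕜 n : Type*} [RCLike 𝕜] [Fintype n] {A : Matrix n n 𝕜}
    (hA : A.PosSemidef) (T : Finset n) :
    (A.submatrix ((↑) : T → n) (↑)).trace ≤ A.trace := by
  simp only [trace, diag, submatrix_apply]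
  rw [Finset.sum_coe_sort T (fun i => A i i)]
  exact Finset.sum_le_sum_of_subset_of_nonneg (Finset.subset_univ T) fun i _ _ => hA.diag_nonneg

section RestrictedWitness

def restrictedWitness {R m : Type*} [CommSemiring R] [DecidableEq m] (T : Finset m) :
    Matrix (m × m) (m × m) R :=
  ∑ i ∈ T, ∑ j ∈ T, single i j 1 ⊗ₖ single j i 1

theorem trace_kronecker_mul_restrictedWitness {R m : Type*} [CommSemiring R] [Fintype m]
    [DecidableEq m] (A B : Matrix m m R) (T : Finset m) :
    ((A ⊗ₖ B) * restrictedWitness T).trace =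
      (A.submatrix (↑) (↑) * B.submatrix (↑) (↑) : Matrix T T R).trace := by
  simp only [restrictedWitness, Finset.mul_sum, trace_sum, ← mul_kronecker_mul, trace_kronecker,
    trace_mul_single, MulOpposite.op_one, one_smul]
  simp only [trace, diag, mul_apply, submatrix_apply]
  rw [Finset.sum_comm]
  simp only [← Finset.sum_coe_sort T]

variable {𝕜 n : Type*} [RCLike 𝕜] [Fintype n] [DecidableEq n] {A B : Matrix n n 𝕜}

theorem PosSemidef.trace_kronecker_mul_restrictedWitness_nonneg (hA : A.PosSemidef)
    (hB : B.PosSemidef) (T : Finset n) : 0 ≤ ((A ⊗ₖ B) * restrictedWitness T).trace := by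
  rw [trace_kronecker_mul_restrictedWitness]
  exact (hA.submatrix _).trace_mul_nonneg (hB.submatrix _)

theorem PosSemidef.trace_kronecker_mul_restrictedWitness_le (hA : A.PosSemidef)
    (hB : B.PosSemidef) (T : Finset n) :
    ((A ⊗ₖ B) * restrictedWitness T).trace ≤ A.trace * B.trace := by
  rw [trace_kronecker_mul_restrictedWitness]
  calc _ ≤ (A.submatrix ((↑) : T → n) (↑)).trace * (B.submatrix ((↑) : T → n) (↑)).trace :=
        (hA.submatrix _).trace_mul_le_trace_mul_trace (hB.submatrix _)
    _ ≤ A.trace * B.trace :=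
        mul_le_mul (hA.trace_submatrix_le T) (hB.trace_submatrix_le T)
          (hB.submatrix _).trace_nonneg hA.trace_nonneg

end RestrictedWitness

end Matrix

theorem restricted_witness_separable_bounds_general
    (n : ℕ)
    (T : Finset (Fin n))
    (W : Matrix (Fin n × Fin n) (Fin n × Fin n) ℂ)
    (hW : W = ∑ i ∈ T, ∑ j ∈ T,
        (Matrix.single i j (1 : ℂ)) ⊗ₖ (Matrix.single j i (1 : ℂ)))
    (K : Type) [Fintype K]
    (p : K → ℝ) (hp : ∀ k, 0 ≤ p k) (hpsum : ∑ k, p k = 1)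
    (σ₁ σ₂ : K → Matrix (Fin n) (Fin n) ℂ)
    (h₁pos : ∀ k, (σ₁ k).PosSemidef) (h₁tr : ∀ k, (σ₁ k).trace = 1)
    (h₂pos : ∀ k, (σ₂ k).PosSemidef) (h₂tr : ∀ k, (σ₂ k).trace = 1)
    (σ : Matrix (Fin n × Fin n) (Fin n × Fin n) ℂ)
    (hσ : σ = ∑ k : K, (p k : ℂ) • ((σ₁ k) ⊗ₖ (σ₂ k))) :
    (σ * W).trace.im = 0 ∧ 0 ≤ (σ * W).trace.re ∧ (σ * W).trace.re ≤ 1 := by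
  obtain rfl : W = restrictedWitness T := hW
  set t : K → ℂ := fun k => ((σ₁ k ⊗ₖ σ₂ k) * restrictedWitness T).trace
  have ht_nonneg (k : K) : 0 ≤ t k :=
    (h₁pos k).trace_kronecker_mul_restrictedWitness_nonneg (h₂pos k) T
  have ht_le_one (k : K) : t k ≤ 1 := by
    simpa [h₁tr, h₂tr] using (h₁pos k).trace_kronecker_mul_restrictedWitness_le (h₂pos k) T
  have hp' (k : K) : (0 : ℂ) ≤ p k := Complex.zero_le_real.mpr (hp k)
  have htrace : (σ * restrictedWitness T).trace = ∑ k, (p k : ℂ) * t k := by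
    simp only [hσ, Finset.sum_mul, trace_sum, smul_mul, trace_smul, smul_eq_mul, t]
  have hnonneg : 0 ≤ (σ * restrictedWitness T).trace :=
    htrace ▸ Finset.sum_nonneg fun k _ => mul_nonneg (hp' k) (ht_nonneg k)
  have hle_one : (σ * restrictedWitness T).trace ≤ 1 := calc
    _ ≤ ∑ k, (p k : ℂ) :=
      htrace ▸ Finset.sum_le_sum fun k _ => mul_le_of_le_one_right (hp' k) (ht_le_one k)
    _ = 1 := mod_cast hpsum
  obtain ⟨hre_nonneg, him⟩ := Complex.le_def.mp hnonneg
  exact ⟨him.symm, hre_nonneg, (Complex.le_def.mp hle_one).1⟩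

/-- For a subset `T` of the index set, the restricted witness
`W_T := Σ_{i,j ∈ T} E_{ij} ⊗ E_{ji}` satisfies the separability bounds: for every
separable state `σ` on `ℂⁿ ⊗ ℂⁿ`, `Tr(σ·W_T)` is a real number in `[0,1]`. -/
theorem restricted_witness_separable_bounds
    (n : ℕ) (hn : 1 ≤ n)
    (T : Finset (Fin n))
    (W : Matrix (Fin n × Fin n) (Fin n × Fin n) ℂ)
    (hW : W = ∑ i ∈ T, ∑ j ∈ T,
        (Matrix.single i j (1 : ℂ)) ⊗ₖ (Matrix.single j i (1 : ℂ)))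
    (K : Type) [Fintype K]
    (p : K → ℝ) (hp : ∀ k, 0 ≤ p k) (hpsum : ∑ k, p k = 1)
    (σ₁ σ₂ : K → Matrix (Fin n) (Fin n) ℂ)
    (h₁pos : ∀ k, (σ₁ k).PosSemidef) (h₁tr : ∀ k, (σ₁ k).trace = 1)
    (h₂pos : ∀ k, (σ₂ k).PosSemidef) (h₂tr : ∀ k, (σ₂ k).trace = 1)
    (σ : Matrix (Fin n × Fin n) (Fin n × Fin n) ℂ)
    (hσ : σ = ∑ k : K, (p k : ℂ) • ((σ₁ k) ⊗ₖ (σ₂ k))) :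
    (σ * W).trace.im = 0 ∧ 0 ≤ (σ * W).trace.re ∧ (σ * W).trace.re ≤ 1 :=
  restricted_witness_separable_bounds_general n T W hW K p hp hpsum σ₁ σ₂ h₁pos h₁tr h₂pos h₂tr σ hσ
end
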